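/- arXiv:1905.05817 — 4 statements merged into one kernel-verified Lean document; each statement's English description precedes it below -/
import Mathlib

section
/- Let $\mathcal{U}, \mathcal{Y}$ be real Hilbert spaces, $\mathcal{T} \subset \mathcal{Y}$ a closed subspace with orthogonal projection $\Pi_{\mathcal{T}}$, $\lambda > 0$, and $\mathcal{H}^0 \subset \mathcal{U} \times \mathcal{Y}$ a subspace. Define $A((u,y),(u,y)) = \|u\|_{\mathcal{U}}^2 + \lambda \|\Pi_{\mathcal{T}} y\|_{\mathcal{Y}}^2$. Suppose $\overline{\eta} := \sup_{(u,y)\in\mathcal{H}^0, u \neq 0} \|y\|/\|u\| < \infty$ and $\kappa := \inf_{(u,y)\in\mathcal{H}^0, y \neq 0} \|\Pi_{\mathcal{T}} y\|/\|y\| \geq 0$. If $\lambda \kappa^2 \leq 1$, then for all $(u,y) \in \mathcal{H}^0$: $A((u,y),(u,y)) \geq \frac{1 + \lambda \kappa^2 \overline{\eta}^2}{1 + \overline{\eta}^2} (\|u\|^2 + \|y\|^2)$. -/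
/-! With `a = ‖u‖²`, `b = ‖y‖²`, `μ = λκ²`, the hypotheses give `b ≤ η̄² a` and
`λ ‖Π_T y‖² ≥ μ b`, and the claimed inequality then reduces to
`0 ≤ (1 - μ) (η̄² a - b)`, a product of two nonnegative factors. -/

theorem div_mul_add_le_add_of_le_mul {a b c η μ : ℝ} (hη : 0 ≤ η) (hμ : μ ≤ 1)
    (hb : b ≤ η * a) (hc : μ * b ≤ c) :
    (1 + μ * η) / (1 + η) * (a + b) ≤ a + c := by
  rw [div_mul_eq_mul_div, div_le_iff₀ (by positivity)]
  have key : 0 ≤ (1 - μ) * (η * a - b) := mul_nonneg (by linarith) (by linarith)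
  nlinarith

theorem stmt1_general {U Y : Type*}
    [NormedAddCommGroup U] [InnerProductSpace ℝ U]
    [NormedAddCommGroup Y] [InnerProductSpace ℝ Y]
    (T : Submodule ℝ Y) [T.HasOrthogonalProjection]
    (H0 : Submodule ℝ (U × Y))
    (lam : ℝ) (hlam : 0 < lam)
    (etaBar kappa : ℝ) (hkappa : 0 ≤ kappa)
    (hEta : ∀ p ∈ H0, ‖p.2‖ ≤ etaBar * ‖p.1‖)
    (hKap : ∀ p ∈ H0, kappa * ‖p.2‖ ≤ ‖(T.orthogonalProjectionOnto p.2 : Y)‖)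
    (hcase : lam * kappa ^ 2 ≤ 1) :
    ∀ p ∈ H0,
      (1 + lam * kappa ^ 2 * etaBar ^ 2) / (1 + etaBar ^ 2) * (‖p.1‖ ^ 2 + ‖p.2‖ ^ 2)
        ≤ ‖p.1‖ ^ 2 + lam * ‖(T.orthogonalProjectionOnto p.2 : Y)‖ ^ 2 := by
  intro p hp
  have hy : ‖p.2‖ ^ 2 ≤ etaBar ^ 2 * ‖p.1‖ ^ 2 := by
    rw [← mul_pow]
    exact pow_le_pow_left₀ (norm_nonneg _) (hEta p hp) 2
  have hproj : lam * kappa ^ 2 * ‖p.2‖ ^ 2 ≤ lam * ‖(T.orthogonalProjectionOnto p.2 : Y)‖ ^ 2 := by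
    rw [mul_assoc, ← mul_pow]
    exact mul_le_mul_of_nonneg_left
      (pow_le_pow_left₀ (by positivity) (hKap p hp) 2) hlam.le
  exact div_mul_add_le_add_of_le_mul (sq_nonneg etaBar) hcase hy hproj

/-- coercivity lower bound for A on H⁰ in the case λκ² ≤ 1. -/
theorem stmt1 {U Y : Type*}
    [NormedAddCommGroup U] [InnerProductSpace ℝ U]
    [NormedAddCommGroup Y] [InnerProductSpace ℝ Y]
    (T : Submodule ℝ Y) [T.HasOrthogonalProjection]
    (H0 : Submodule ℝ (U × Y))
    (lam : ℝ) (hlam : 0 < lam)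
    (etaBar kappa : ℝ) (hetaBar : 0 < etaBar) (hkappa : 0 ≤ kappa)
    (hEta : ∀ p ∈ H0, ‖p.2‖ ≤ etaBar * ‖p.1‖)
    (hKap : ∀ p ∈ H0, kappa * ‖p.2‖ ≤ ‖(T.orthogonalProjectionOnto p.2 : Y)‖)
    (hcase : lam * kappa ^ 2 ≤ 1) :
    ∀ p ∈ H0,
      (1 + lam * kappa ^ 2 * etaBar ^ 2) / (1 + etaBar ^ 2) * (‖p.1‖ ^ 2 + ‖p.2‖ ^ 2)
        ≤ ‖p.1‖ ^ 2 + lam * ‖(T.orthogonalProjectionOnto p.2 : Y)‖ ^ 2 :=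
  stmt1_general T H0 lam hlam etaBar kappa hkappa hEta hKap hcase
end

section
/- In the same setting, suppose additionally $\underline{\eta} := \inf_{(u,y)\in\mathcal{H}^0, u\neq 0} \|y\|/\|u\| \geq 0$ and $\lambda \kappa^2 > 1$. Then for all $(u,y) \in \mathcal{H}^0$: $\|u\|_{\mathcal{U}}^2 + \lambda \|\Pi_{\mathcal{T}} y\|_{\mathcal{Y}}^2 \geq \frac{1 + \lambda \kappa^2 \underline{\eta}^2}{1 + \underline{\eta}^2} (\|u\|^2 + \|y\|^2)$. -/
/-! Write `a = ‖u‖`, `b = ‖y‖`, `c = ‖Π_T y‖`. Since `c² ≥ κ²b²`, it suffices to compare with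
`a² + λκ²b²`, and `(1 + η²)(a² + λκ²b²) - (1 + λκ²η²)(a² + b²) = (λκ² - 1)(b² - η²a²)`,
a product of two nonnegative factors. -/

theorem div_mul_add_sq_le_add_mul_sq {a b c η κ l : ℝ} (hl : 0 ≤ l) (hη : 0 ≤ η) (hκ : 0 ≤ κ)
    (ha : 0 ≤ a) (hab : η * a ≤ b) (hbc : κ * b ≤ c) (hlκ : 1 ≤ l * κ ^ 2) :
    (1 + l * κ ^ 2 * η ^ 2) / (1 + η ^ 2) * (a ^ 2 + b ^ 2) ≤ a ^ 2 + l * c ^ 2 := by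
  have hb : 0 ≤ b := (mul_nonneg hη ha).trans hab
  have hab2 : η ^ 2 * a ^ 2 ≤ b ^ 2 := by
    rw [← mul_pow]; exact pow_le_pow_left₀ (mul_nonneg hη ha) hab 2
  have hbc2 : κ ^ 2 * b ^ 2 ≤ c ^ 2 := by
    rw [← mul_pow]; exact pow_le_pow_left₀ (mul_nonneg hκ hb) hbc 2
  rw [div_mul_eq_mul_div, div_le_iff₀ (by positivity)]
  calc (1 + l * κ ^ 2 * η ^ 2) * (a ^ 2 + b ^ 2)
      ≤ (a ^ 2 + l * κ ^ 2 * b ^ 2) * (1 + η ^ 2) := by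
        linear_combination mul_nonneg (sub_nonneg.2 hlκ) (sub_nonneg.2 hab2)
    _ ≤ (a ^ 2 + l * c ^ 2) * (1 + η ^ 2) := by
        rw [mul_assoc l]; gcongr

/-- coercivity lower bound for A on H⁰ in the case λκ² > 1. -/
theorem stmt2 {U Y : Type*}
    [NormedAddCommGroup U] [InnerProductSpace ℝ U]
    [NormedAddCommGroup Y] [InnerProductSpace ℝ Y]
    (T : Submodule ℝ Y) [T.HasOrthogonalProjection]
    (H0 : Submodule ℝ (U × Y))
    (lam : ℝ) (hlam : 0 < lam)
    (etaUnd kappa : ℝ) (hetaUnd : 0 ≤ etaUnd) (hkappa : 0 < kappa)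
    (hEta : ∀ p ∈ H0, etaUnd * ‖p.1‖ ≤ ‖p.2‖)
    (hKap : ∀ p ∈ H0, kappa * ‖p.2‖ ≤ ‖(T.orthogonalProjectionOnto p.2 : Y)‖)
    (hcase : 1 < lam * kappa ^ 2) :
    ∀ p ∈ H0,
      (1 + lam * kappa ^ 2 * etaUnd ^ 2) / (1 + etaUnd ^ 2) * (‖p.1‖ ^ 2 + ‖p.2‖ ^ 2)
        ≤ ‖p.1‖ ^ 2 + lam * ‖(T.orthogonalProjectionOnto p.2 : Y)‖ ^ 2 :=
  fun p hp => div_mul_add_sq_le_add_mul_sq hlam.le hetaUnd hkappa.le (norm_nonneg _)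
    (hEta p hp) (hKap p hp) hcase.le
end

section
/- Let $\mathcal{U}, \mathcal{Y}$ be real Hilbert spaces, $\mathcal{T} \subset \mathcal{Y}$ a closed subspace, $a$ coercive on $\mathcal{Y}$ with constant $\alpha > 0$, $b$ bounded with constant $\gamma_b$, and $\lambda > 0$. Suppose $(e_u, e_y, e_d, e_p) \in \mathcal{U}\times\mathcal{Y}\times\mathcal{Y}\times\mathcal{T}$ solves the error system: $\langle e_u,\phi\rangle - b(\phi,e_p) = r_u(\phi)$ for all $\phi\in\mathcal{U}$; $a(\psi,e_p) - \lambda\langle e_d,\psi\rangle = r_p(\psi)$ for all $\psi\in\mathcal{Y}$; $a(e_y,\psi) - b(e_u,\psi) = r_y(\psi)$ for all $\psi\in\mathcal{Y}$; $\langle e_y + e_d, \tau\rangle = 0$ for all $\tau\in\mathcal{T}$. Then $\|e_u\|^2 + \lambda\|e_d\|^2 \leq (\|r_u\| + \frac{\gamma_b}{\alpha}\|r_p\|)\|e_u\| + \frac{2}{\alpha}\|r_p\|\|r_y\| + \frac{\lambda}{\alpha}\|r_y\|\|e_d\|$. -/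
/-!
Testing the first three equations with `e_u`, `e_y`, `e_p` and the fourth with `e_d ∈ T`, the
`a`- and `b`-terms cancel and `‖e_u‖² + λ‖e_d‖² = r_u(e_u) + r_p(e_y) - r_y(e_p)`. Coercivity,
applied to the third and second equations tested with `e_y` resp. `e_p`, gives
`α‖e_y‖ ≤ γ_b‖e_u‖ + ‖r_y‖` and `α‖e_p‖ ≤ ‖r_p‖ + λ‖e_d‖`; bounding the three functionals by their
dual norms and inserting these estimates yields the claim.
-/

theorem ContinuousLinearMap.apply_le_opNorm {E : Type*} [SeminormedAddCommGroup E]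
    [NormedSpace ℝ E] (r : E →L[ℝ] ℝ) (x : E) : r x ≤ ‖r‖ * ‖x‖ :=
  (le_abs_self _).trans (r.le_opNorm x)

theorem nonneg_of_abs_le_mul_norm {E : Type*} [NormedAddCommGroup E] [Nontrivial E]
    {f : E → ℝ} {c : ℝ} (h : ∀ x, |f x| ≤ c * ‖x‖) : 0 ≤ c := by
  obtain ⟨x, hx⟩ := exists_ne (0 : E)
  exact nonneg_of_mul_nonneg_left ((abs_nonneg _).trans (h x)) (norm_pos_iff.mpr hx)

theorem mul_norm_le_of_coercive {E : Type*} [SeminormedAddCommGroup E] [Module ℝ E]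
    {a : E →ₗ[ℝ] E →ₗ[ℝ] ℝ} {α : ℝ} (hcoer : ∀ y : E, α * ‖y‖ ^ 2 ≤ a y y)
    {y : E} {C : ℝ} (hC : 0 ≤ C) (h : a y y ≤ C * ‖y‖) : α * ‖y‖ ≤ C := by
  rcases (norm_nonneg y).eq_or_lt with hy | hy
  · rw [← hy, mul_zero]; exact hC
  · have := hcoer y
    nlinarith

theorem error_energy_identity {U Y : Type*}
    [NormedAddCommGroup U] [InnerProductSpace ℝ U]
    [NormedAddCommGroup Y] [InnerProductSpace ℝ Y]
    {T : Submodule ℝ Y} {a : Y →ₗ[ℝ] Y →ₗ[ℝ] ℝ} {b : U →ₗ[ℝ] Y →ₗ[ℝ] ℝ} {lam : ℝ}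
    {e_u : U} {e_y e_d e_p : Y} (hed : e_d ∈ T)
    {r_u : U →L[ℝ] ℝ} {r_p r_y : Y →L[ℝ] ℝ}
    (h1 : ∀ φ : U, (inner ℝ e_u φ : ℝ) - b φ e_p = r_u φ)
    (h2 : ∀ ψ : Y, a ψ e_p - lam * (inner ℝ e_d ψ : ℝ) = r_p ψ)
    (h3 : ∀ ψ : Y, a e_y ψ - b e_u ψ = r_y ψ)
    (h4 : ∀ τ ∈ T, (inner ℝ (e_y + e_d) τ : ℝ) = 0) :
    ‖e_u‖ ^ 2 + lam * ‖e_d‖ ^ 2 = r_u e_u + r_p e_y - r_y e_p := by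
  have h4d := h4 e_d hed
  rw [inner_add_left, real_inner_self_eq_norm_sq, real_inner_comm e_d e_y] at h4d
  have h1u := h1 e_u
  rw [real_inner_self_eq_norm_sq] at h1u
  linear_combination h1u + h2 e_y - h3 e_p + lam * h4d

/-- key intermediate inequality for the error system. -/
theorem stmt10 {U Y : Type*}
    [NormedAddCommGroup U] [InnerProductSpace ℝ U]
    [NormedAddCommGroup Y] [InnerProductSpace ℝ Y]
    (T : Submodule ℝ Y)
    (a : Y →ₗ[ℝ] Y →ₗ[ℝ] ℝ) (b : U →ₗ[ℝ] Y →ₗ[ℝ] ℝ)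
    (α : ℝ) (hα : 0 < α) (hcoer : ∀ y : Y, α * ‖y‖ ^ 2 ≤ a y y)
    (γb : ℝ) (hb : ∀ (u : U) (ψ : Y), |b u ψ| ≤ γb * ‖u‖ * ‖ψ‖)
    (lam : ℝ) (hlam : 0 < lam)
    (e_u : U) (e_y e_d e_p : Y) (hed : e_d ∈ T)
    (r_u : U →L[ℝ] ℝ) (r_p r_y : Y →L[ℝ] ℝ)
    (h1 : ∀ φ : U, (inner ℝ e_u φ : ℝ) - b φ e_p = r_u φ)
    (h2 : ∀ ψ : Y, a ψ e_p - lam * (inner ℝ e_d ψ : ℝ) = r_p ψ)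
    (h3 : ∀ ψ : Y, a e_y ψ - b e_u ψ = r_y ψ)
    (h4 : ∀ τ ∈ T, (inner ℝ (e_y + e_d) τ : ℝ) = 0) :
    ‖e_u‖ ^ 2 + lam * ‖e_d‖ ^ 2 ≤
      (‖r_u‖ + (γb / α) * ‖r_p‖) * ‖e_u‖ +
        (2 / α) * ‖r_p‖ * ‖r_y‖ + (lam / α) * ‖r_y‖ * ‖e_d‖ := by
  have energy := error_energy_identity hed h1 h2 h3 h4
  have bound_p : α * ‖e_p‖ ≤ ‖r_p‖ + lam * ‖e_d‖ := by
    refine mul_norm_le_of_coercive hcoer (by positivity) ?_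
    linarith [h2 e_p, r_p.apply_le_opNorm e_p,
      mul_le_mul_of_nonneg_left (real_inner_le_norm e_d e_p) hlam.le]
  -- Weighted by `‖r_p‖`: `0 ≤ γb` is only forced when `Y` is nontrivial, and otherwise `r_p = 0`.
  have bound_y : ‖r_p‖ * (α * ‖e_y‖) ≤ ‖r_p‖ * (γb * ‖e_u‖ + ‖r_y‖) := by
    rcases subsingleton_or_nontrivial Y with _ | _
    · simp [ContinuousLinearMap.opNorm_subsingleton]
    have hγ : 0 ≤ γb * ‖e_u‖ := nonneg_of_abs_le_mul_norm (hb e_u)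
    refine mul_le_mul_of_nonneg_left (mul_norm_le_of_coercive hcoer (by positivity) ?_)
      (norm_nonneg _)
    linarith [h3 e_y, (le_abs_self _).trans (hb e_u e_y), r_y.apply_le_opNorm e_y]
  have hru := r_u.apply_le_opNorm e_u
  have hrp := r_p.apply_le_opNorm e_y
  have hry : -r_y e_p ≤ ‖r_y‖ * ‖e_p‖ := (neg_le_abs _).trans (r_y.le_opNorm e_p)
  refine le_of_mul_le_mul_left ?_ hα
  calc α * (‖e_u‖ ^ 2 + lam * ‖e_d‖ ^ 2)
      ≤ α * (‖r_u‖ * ‖e_u‖ + ‖r_p‖ * ‖e_y‖ + ‖r_y‖ * ‖e_p‖) := by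
        rw [energy]; gcongr; linarith
    _ ≤ α * ‖r_u‖ * ‖e_u‖ + ‖r_p‖ * (γb * ‖e_u‖ + ‖r_y‖) + ‖r_y‖ * (‖r_p‖ + lam * ‖e_d‖) := by
        linarith [mul_le_mul_of_nonneg_left bound_p (norm_nonneg r_y)]
    _ = α * ((‖r_u‖ + (γb / α) * ‖r_p‖) * ‖e_u‖ +
          (2 / α) * ‖r_p‖ * ‖r_y‖ + (lam / α) * ‖r_y‖ * ‖e_d‖) := by
        field_simp
        ring
end

section
/- Under the hypotheses of the error-system theorem, the misfit error satisfies $\|e_d\| \leq \frac{1}{2}p_d + \sqrt{\frac{1}{4}p_d^2 + q_d}$ where $p_d = \frac{1}{\alpha}\|r_y\|_{\mathcal{Y}'}$ and $q_d = \frac{2}{\lambda\alpha}\|r_p\|_{\mathcal{Y}'}\|r_y\|_{\mathcal{Y}'} + \frac{1}{4\lambda}(\|r_u\|_{\mathcal{U}'} + \frac{\gamma_b}{\alpha}\|r_p\|_{\mathcal{Y}'})^2$. -/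
/-!
Testing the three error equations with `e_u`, `e_y` and `e_p`, and using `⟪e_d, e_y⟫ = -‖e_d‖²`
(from `e_d ∈ T` and `e_y + e_d ⊥ T`), gives the energy identity
`λ‖e_d‖² + ‖e_u‖² = r_u(e_u) + r_p(e_y) - r_y(e_p)`. Coercivity bounds `‖e_y‖` by `‖e_u‖` and `‖e_p‖`
by `‖e_d‖`; Young's inequality then absorbs the `‖e_u‖` terms, leaving a quadratic inequality
`x² ≤ p x + q` for `x = ‖e_d‖`, so `x` is at most the larger root.
-/

open Real

theorem le_half_add_sqrt_of_sq_le_mul_add {x p q : ℝ} (h : x ^ 2 ≤ p * x + q) :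
    x ≤ (1 / 2) * p + √((1 / 4) * p ^ 2 + q) := by
  have hsq : (x - p / 2) ^ 2 ≤ (1 / 4) * p ^ 2 + q := by linarith
  calc x = p / 2 + (x - p / 2) := by ring
    _ ≤ p / 2 + |x - p / 2| := by gcongr; exact le_abs_self _
    _ ≤ (1 / 2) * p + √((1 / 4) * p ^ 2 + q) := by
      rw [← sqrt_sq_eq_abs]; linarith [sqrt_le_sqrt hsq]

theorem mul_norm_le_of_coercive_s12 {E : Type*} [NormedAddCommGroup E] [NormedSpace ℝ E]
    {a : E →ₗ[ℝ] E →ₗ[ℝ] ℝ} {α : ℝ} (hcoer : ∀ y, α * ‖y‖ ^ 2 ≤ a y y) {y : E} {c : ℝ}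
    (hy : a y y ≤ c * ‖y‖) (hc : y = 0 → 0 ≤ c) : α * ‖y‖ ≤ c := by
  rcases eq_or_ne y 0 with rfl | hy0
  · simpa using hc rfl
  · have := hcoer y
    exact le_of_mul_le_mul_right (by nlinarith) (norm_pos_iff.mpr hy0)

theorem real_inner_eq_neg_norm_sq_of_add_mem_orthogonal {Y : Type*} [NormedAddCommGroup Y]
    [InnerProductSpace ℝ Y] {T : Submodule ℝ Y} {d y : Y} (hd : d ∈ T)
    (h : ∀ τ ∈ T, inner ℝ (y + d) τ = 0) : inner ℝ d y = -‖d‖ ^ 2 := by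
  have := h d hd
  rw [inner_add_left, real_inner_self_eq_norm_sq, real_inner_comm] at this
  linarith

theorem sq_le_of_energy_bound {α γb lam x u ey ep Ru Rp Ry : ℝ} (hα : 0 < α) (hlam : 0 < lam)
    (hRp : 0 ≤ Rp) (hRy : 0 ≤ Ry)
    (henergy : lam * x ^ 2 + u ^ 2 ≤ Ru * u + Rp * ey + Ry * ep)
    (hey : α * ey ≤ γb * u + Ry) (hep : α * ep ≤ lam * x + Rp) :
    x ^ 2 ≤ (1 / α) * Ry * x +
      ((2 / (lam * α)) * Rp * Ry + (1 / (4 * lam)) * (Ru + (γb / α) * Rp) ^ 2) := by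
  set c := Ru + (γb / α) * Rp
  have hey' : Rp * ey ≤ Rp * ((γb * u + Ry) / α) := by
    gcongr; rwa [le_div_iff₀ hα, mul_comm]
  have hep' : Ry * ep ≤ Ry * ((lam * x + Rp) / α) := by
    gcongr; rwa [le_div_iff₀ hα, mul_comm]
  have young : c * u ≤ u ^ 2 + c ^ 2 / 4 := by nlinarith [sq_nonneg (u - c / 2)]
  refine le_of_mul_le_mul_left ?_ hlam
  calc lam * x ^ 2 ≤ Ru * u + Rp * ((γb * u + Ry) / α) + Ry * ((lam * x + Rp) / α)
        - c * u + c ^ 2 / 4 := by linarith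
    _ = lam * ((1 / α) * Ry * x +
          ((2 / (lam * α)) * Rp * Ry + (1 / (4 * lam)) * c ^ 2)) := by
      simp only [c]; field_simp; ring

section ErrorSystem

variable {U Y : Type*} [NormedAddCommGroup U] [InnerProductSpace ℝ U]
  [NormedAddCommGroup Y] [InnerProductSpace ℝ Y]
  {a : Y →ₗ[ℝ] Y →ₗ[ℝ] ℝ} {b : U →ₗ[ℝ] Y →ₗ[ℝ] ℝ} {α γb lam : ℝ}
  {e_u : U} {e_y e_d e_p : Y} {r_u : U →L[ℝ] ℝ} {r_p r_y : Y →L[ℝ] ℝ}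

theorem error_energy_eq (h1 : ∀ φ : U, (inner ℝ e_u φ : ℝ) - b φ e_p = r_u φ)
    (h2 : ∀ ψ : Y, a ψ e_p - lam * (inner ℝ e_d ψ : ℝ) = r_p ψ)
    (h3 : ∀ ψ : Y, a e_y ψ - b e_u ψ = r_y ψ) (hdy : inner ℝ e_d e_y = -‖e_d‖ ^ 2) :
    lam * ‖e_d‖ ^ 2 + ‖e_u‖ ^ 2 = r_u e_u + r_p e_y - r_y e_p := by
  have hu := h1 e_u
  have hy := h2 e_y
  have hp := h3 e_p
  rw [real_inner_self_eq_norm_sq] at hu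
  rw [hdy] at hy
  linarith

theorem error_energy_le (h1 : ∀ φ : U, (inner ℝ e_u φ : ℝ) - b φ e_p = r_u φ)
    (h2 : ∀ ψ : Y, a ψ e_p - lam * (inner ℝ e_d ψ : ℝ) = r_p ψ)
    (h3 : ∀ ψ : Y, a e_y ψ - b e_u ψ = r_y ψ) (hdy : inner ℝ e_d e_y = -‖e_d‖ ^ 2) :
    lam * ‖e_d‖ ^ 2 + ‖e_u‖ ^ 2 ≤ ‖r_u‖ * ‖e_u‖ + ‖r_p‖ * ‖e_y‖ + ‖r_y‖ * ‖e_p‖ := by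
  rw [error_energy_eq h1 h2 h3 hdy]
  have hu := (le_abs_self _).trans (r_u.le_opNorm e_u)
  have hy := (le_abs_self _).trans (r_p.le_opNorm e_y)
  have hp := (neg_abs_le _).trans' (neg_le_neg (r_y.le_opNorm e_p))
  linarith

theorem mul_norm_state_error_le (hcoer : ∀ y : Y, α * ‖y‖ ^ 2 ≤ a y y)
    (hb : ∀ (u : U) (ψ : Y), |b u ψ| ≤ γb * ‖u‖ * ‖ψ‖)
    (h3 : ∀ ψ : Y, a e_y ψ - b e_u ψ = r_y ψ) (hey : e_y ≠ 0) :
    α * ‖e_y‖ ≤ γb * ‖e_u‖ + ‖r_y‖ := by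
  refine mul_norm_le_of_coercive_s12 hcoer ?_ (absurd · hey)
  have hb' := (le_abs_self _).trans (hb e_u e_y)
  have hr := (le_abs_self _).trans (r_y.le_opNorm e_y)
  linarith [h3 e_y]

theorem mul_norm_adjoint_error_le (hcoer : ∀ y : Y, α * ‖y‖ ^ 2 ≤ a y y) (hlam : 0 ≤ lam)
    (h2 : ∀ ψ : Y, a ψ e_p - lam * (inner ℝ e_d ψ : ℝ) = r_p ψ) :
    α * ‖e_p‖ ≤ lam * ‖e_d‖ + ‖r_p‖ := by
  refine mul_norm_le_of_coercive_s12 hcoer ?_ fun _ ↦ by positivity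
  have hi := mul_le_mul_of_nonneg_left (real_inner_le_norm e_d e_p) hlam
  have hr := (le_abs_self _).trans (r_p.le_opNorm e_p)
  linarith [h2 e_p]

end ErrorSystem

/-- a posteriori bound for the misfit error ‖e_d‖. -/
theorem stmt12 {U Y : Type*}
    [NormedAddCommGroup U] [InnerProductSpace ℝ U]
    [NormedAddCommGroup Y] [InnerProductSpace ℝ Y]
    (T : Submodule ℝ Y)
    (a : Y →ₗ[ℝ] Y →ₗ[ℝ] ℝ) (b : U →ₗ[ℝ] Y →ₗ[ℝ] ℝ)
    (α : ℝ) (hα : 0 < α) (hcoer : ∀ y : Y, α * ‖y‖ ^ 2 ≤ a y y)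
    (γb : ℝ) (hb : ∀ (u : U) (ψ : Y), |b u ψ| ≤ γb * ‖u‖ * ‖ψ‖)
    (lam : ℝ) (hlam : 0 < lam)
    (e_u : U) (e_y e_d e_p : Y) (hed : e_d ∈ T)
    (r_u : U →L[ℝ] ℝ) (r_p r_y : Y →L[ℝ] ℝ)
    (h1 : ∀ φ : U, (inner ℝ e_u φ : ℝ) - b φ e_p = r_u φ)
    (h2 : ∀ ψ : Y, a ψ e_p - lam * (inner ℝ e_d ψ : ℝ) = r_p ψ)
    (h3 : ∀ ψ : Y, a e_y ψ - b e_u ψ = r_y ψ)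
    (h4 : ∀ τ ∈ T, (inner ℝ (e_y + e_d) τ : ℝ) = 0) :
    ‖e_d‖ ≤ (1 / 2) * ((1 / α) * ‖r_y‖) +
      Real.sqrt ((1 / 4) * ((1 / α) * ‖r_y‖) ^ 2 +
        ((2 / (lam * α)) * ‖r_p‖ * ‖r_y‖ +
          (1 / (4 * lam)) * (‖r_u‖ + (γb / α) * ‖r_p‖) ^ 2)) := by
  have hdy := real_inner_eq_neg_norm_sq_of_add_mem_orthogonal hed h4
  rcases eq_or_ne e_d 0 with rfl | hd
  · rw [norm_zero]
    positivity
  have hey : e_y ≠ 0 := by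
    rintro rfl
    simp only [inner_zero_right, zero_eq_neg, pow_eq_zero_iff two_ne_zero, norm_eq_zero] at hdy
    exact hd hdy
  exact le_half_add_sqrt_of_sq_le_mul_add <| sq_le_of_energy_bound hα hlam (norm_nonneg _)
    (norm_nonneg _) (error_energy_le h1 h2 h3 hdy) (mul_norm_state_error_le hcoer hb h3 hey)
    (mul_norm_adjoint_error_le hcoer hlam.le h2)
end
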